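/- Let z be a complex number with Re z > 0. Then lim_{α → 0⁺} [λ(αz) − λ(iα)] = πi/2 − log z, where for real 0 < α < 1 one sets λ(iα) := −log(1 − e^{−2πiα}), and log denotes the principal branch of the logarithm. -/

import Mathlib

open Filter Topology

/-- `λ(x) = −log(1 − e^{−2πx})` (equal to `Σ_{m≥1} e^{−2πmx}/m` for `Re x > 0`),
principal branch of `log`. -/
noncomputable def lam (x : ℂ) : ℂ := -Complex.log (1 - Complex.exp (-2 * Real.pi * x))

/-- `λ` restricted to the positive real axis (real-valued). -/
noncomputable def lamR (t : ℝ) : ℝ := -Real.log (1 - Real.exp (-2 * Real.pi * t))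

/-- The Dedekind sum `s(h, k) = Σ_{r=1}^{k−1} (r/k)(hr/k − ⌊hr/k⌋ − 1/2)`. -/
noncomputable def dedekindSum (h : ℤ) (k : ℕ) : ℝ :=
  ∑ r ∈ Finset.Icc 1 (k - 1),
    ((r : ℝ) / k) * ((h : ℝ) * r / k - ⌊(h : ℝ) * r / k⌋ - 1 / 2)

/-- A canonical integer `H` with `h·H ≡ −1 (mod k)` when `gcd(h,k) = 1`. -/
noncomputable def Hinv (h k : ℕ) : ℕ := (-(h : ZMod k)⁻¹).val

/-- The α-Kloosterman sum
`A_k^{(α)}(n, m) = Σ_{0 ≤ h < k, gcd(h,k)=1} exp(απi·s(h,k) + (2πi/k)(mH − nh))`. -/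
noncomputable def kloosterman (α : ℝ) (k : ℕ) (n m : ℤ) : ℂ :=
  ∑ h ∈ Finset.range k,
    if Nat.gcd h k = 1 then
      Complex.exp ((α : ℂ) * (Real.pi : ℝ) * Complex.I * (dedekindSum h k : ℝ) +
        2 * (Real.pi : ℝ) * Complex.I / (k : ℂ) *
          ((m : ℂ) * (Hinv h k : ℕ) - (n : ℂ) * (h : ℕ)))
    else 0

/-- The modified Bessel function of the first kind,
`I_ν(z) = (z/2)^ν Σ_{k≥0} (z/2)^{2k}/(k! Γ(ν+k+1))`, for real `ν` and `z ≥ 0`. -/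
noncomputable def besselI (ν z : ℝ) : ℝ :=
  (z / 2) ^ ν * ∑' k : ℕ, (z / 2) ^ (2 * k) / (k.factorial * Real.Gamma (ν + k + 1))

/-- `P(x)^α = ∏_{k≥1} exp(−α log(1 − x^k))`, principal branch of `log`. -/
noncomputable def Palpha (α : ℝ) (x : ℂ) : ℂ :=
  ∏' k : ℕ, Complex.exp (-(α : ℂ) * Complex.log (1 - x ^ (k + 1)))

/-- The fractional partition function `p_α(n)`: the `n`-th Maclaurin coefficient of
`P(x)^α` (which is a real number). -/
noncomputable def fracPart (α : ℝ) (n : ℕ) : ℝ :=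
  ((iteratedDeriv n (Palpha α) 0) / (n.factorial : ℂ)).re

/-- `ν_α(n) = √(n − α/24)`. -/
noncomputable def nuA (α : ℝ) (n : ℕ) : ℝ := Real.sqrt (n - α / 24)

/-- `μ_α(m) = √(α/24 − m)`. -/
noncomputable def muA (α : ℝ) (m : ℕ) : ℝ := Real.sqrt (α / 24 - m)

/-- The truncated series `p_α(n; δ)`. -/
noncomputable def pTrunc (α : ℝ) (n : ℕ) (δ : ℝ) : ℂ :=
  ((nuA α n ^ (-(α / 2) - 1) : ℝ) : ℂ) *
    ∑ m ∈ Finset.range (⌊α / 24⌋₊ + 1),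
      ((muA α m ^ (α / 2 + 1) * fracPart α m : ℝ) : ℂ) *
        ∑ k ∈ Finset.Ico 1 ⌈2 * Real.pi / δ * muA α m⌉₊,
          ((2 * Real.pi / k : ℝ) : ℂ) * kloosterman α k n m *
            ((besselI (α / 2 + 1) (4 * Real.pi / k * nuA α n * muA α m) : ℝ) : ℂ)

/-- The Jensen polynomial `J_a^{d,n}(X) = Σ_{j=0}^d C(d,j) a(n+j) X^j`. -/
noncomputable def jensenPoly (a : ℕ → ℝ) (d n : ℕ) : Polynomial ℝ :=
  ∑ j ∈ Finset.range (d + 1), Polynomial.C ((d.choose j : ℝ) * a (n + j)) * Polynomial.X ^ j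

/-!
As `a → 0⁺`, `1 - e^{-2πaw} = 2πa·(w + o(1))`, so for `w` in the slit plane
`λ(aw) = -log(2πa) - log w + o(1)`. The divergent term `-log(2πa)` cancels in
`λ(az) - λ(ia)`, leaving `log i - log z = πi/2 - log z`.
-/

open Complex Real

lemma tendsto_one_sub_exp_div (w : ℂ) :
    Tendsto (fun a : ℝ => (1 - exp (-2 * π * (a * w))) / (2 * π * a)) (𝓝[>] 0) (𝓝 w) := by
  have hderiv : HasDerivAt (fun a : ℝ => 1 - exp (-2 * π * (a * w))) (2 * π * w) 0 := by
    simpa using (((hasDerivAt_id (0 : ℝ)).ofReal_comp.mul_const w).const_mul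
      (-2 * (π : ℂ))).cexp.const_sub 1
  have hslope := hderiv.tendsto_slope_zero_right.div_const (2 * π : ℂ)
  rw [mul_div_cancel_left₀ _ (by simp [Real.pi_ne_zero])] at hslope
  refine hslope.congr fun a => ?_
  simp only [zero_add, ofReal_zero, zero_mul, mul_zero, Complex.exp_zero, sub_self, sub_zero,
    Complex.real_smul]
  push_cast
  field_simp

lemma lam_ofReal_mul {a : ℝ} (ha : 0 < a) {w : ℂ}
    (hw : (1 - exp (-2 * π * (a * w))) / (2 * π * a) ≠ 0) :
    lam (a * w) = -Real.log (2 * π * a) - log ((1 - exp (-2 * π * (a * w))) / (2 * π * a)) := by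
  have h2πa : 0 < 2 * π * a := by positivity
  rw [lam, ← neg_add', ← log_ofReal_mul h2πa hw]
  push_cast
  rw [mul_div_cancel₀ _ (by simp [Real.pi_ne_zero, ha.ne'])]

/-- `lim_{α → 0⁺} [λ(αz) − λ(iα)] = πi/2 − log z` for `Re z > 0`
(principal branch of `log`). -/
theorem lam_limit_zero_plus (z : ℂ) (hz : 0 < z.re) :
    Tendsto (fun a : ℝ => lam ((a : ℂ) * z) - lam (Complex.I * a))
      (𝓝[>] (0 : ℝ)) (𝓝 ((Real.pi : ℂ) * Complex.I / 2 - Complex.log z)) := by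
  have hlog (w : ℂ) (hw : w ∈ slitPlane) :
      Tendsto (fun a : ℝ => log ((1 - exp (-2 * π * (a * w))) / (2 * π * a))) (𝓝[>] 0)
        (𝓝 (log w)) :=
    (continuousAt_clog hw).tendsto.comp (tendsto_one_sub_exp_div w)
  have hz' : z ∈ slitPlane := mem_slitPlane_iff.mpr (Or.inl hz)
  have hlim := (hlog I (by simp [mem_slitPlane_iff])).sub (hlog z hz')
  rw [log_I, div_mul_eq_mul_div] at hlim
  refine hlim.congr' ?_
  filter_upwards [self_mem_nhdsWithin,
    (tendsto_one_sub_exp_div z).eventually_ne (slitPlane_ne_zero hz'),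
    (tendsto_one_sub_exp_div I).eventually_ne I_ne_zero] with a ha hqz hqI
  rw [mul_comm I, lam_ofReal_mul ha hqz, lam_ofReal_mul ha hqI]
  ring
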